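/- Let $d, \mathfrak{d} \in \mathrm{Sym}_n$ with $\mathfrak{d} \in \mathscr{R}$ and $d \in \mathscr{C}$, and suppose $C_{\t_0}\, d\, \mathrm{Sym}_{\alpha|\beta} \cap R_{\t_0}\,\mathfrak{d}\,\mathrm{Sym}_{\alpha|\beta}$ is a disjoint union of $r$ left cosets of $\mathrm{Sym}_{\alpha|\beta}$ with representatives $d^{(1)},\dots,d^{(r)}$. For each $i$, choose $\sigma_i \in C_{\t_0}$ with $\sigma_i d \in d^{(i)}\mathrm{Sym}_{\alpha|\beta}$, and set $\varepsilon^{(i)} = \mathrm{sgn}(\sigma_i)\,\varepsilon_{\mathfrak{d}}(\sigma_i d)$. Then $\mathfrak{a}_{d,\mathfrak{d}} = |C_{\t_0} \cap d\,\mathrm{Sym}_{\alpha|\beta}\,d^{-1}| \cdot \sum_{i=1}^r \varepsilon^{(i)}$. -/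

import Mathlib

namespace SignedYoung
open Equiv Finset
open scoped Classical

abbrev Sym (n : ℕ) := Equiv.Perm (Fin n)

/-- Index of the block of the composition `γ` containing position `i` (0-based). -/
def blockOf (γ : List ℕ) (i : ℕ) : ℕ :=
  (List.range γ.length).countP (fun j => decide ((γ.take (j + 1)).sum ≤ i))

/-- The Young subgroup of `Sym n` associated to the composition `γ`. -/
def youngSubgroup (n : ℕ) (γ : List ℕ) : Subgroup (Sym n) where
  carrier := {σ | ∀ i : Fin n, blockOf γ (σ i) = blockOf γ i}
  one_mem' := by intro i; simp
  mul_mem' := by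
    intro a b ha hb i
    simp only [Equiv.Perm.mul_apply]
    rw [ha, hb]
  inv_mem' := by
    intro a ha i
    have h := ha (a⁻¹ i)
    rw [← Equiv.Perm.mul_apply, mul_inv_cancel, Equiv.Perm.one_apply] at h
    exact h.symm

/-- The subgroup `Sym_α` of the Young subgroup `Sym_{α|β}`: block-preserving permutations
fixing all points `≥ |α|`. -/
def symA (n : ℕ) (α β : List ℕ) : Set (Sym n) :=
  {σ | σ ∈ youngSubgroup n (α ++ β) ∧ ∀ i : Fin n, α.sum ≤ (i : ℕ) → σ i = i}

/-- The subgroup `Sym_β^{+|α|}`: block-preserving permutations fixing all points `< |α|`. -/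
def symB (n : ℕ) (α β : List ℕ) : Set (Sym n) :=
  {σ | σ ∈ youngSubgroup n (α ++ β) ∧ ∀ i : Fin n, (i : ℕ) < α.sum → σ i = i}

/-- Cells of the Young diagram of the composition `lam`. -/
abbrev Cell (lam : List ℕ) := (i : Fin lam.length) × Fin (lam.get i)

/-- A `lam`-tableau: a bijective labelling of the cells by `1, …, n` (here `Fin n`). -/
abbrev Tab (n : ℕ) (lam : List ℕ) := Cell lam ≃ Fin n

/-- The row stabilizer of a tableau. -/
def rowStab {n : ℕ} {lam : List ℕ} (t : Tab n lam) : Set (Sym n) :=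
  {σ | ∀ a : Fin n, (t.symm (σ a)).1 = (t.symm a).1}

/-- The column stabilizer of a tableau. -/
def colStab {n : ℕ} {lam : List ℕ} (t : Tab n lam) : Set (Sym n) :=
  {σ | ∀ a : Fin n, ((t.symm (σ a)).2 : ℕ) = ((t.symm a).2 : ℕ)}

/-- Colours `c_1 < c_2 < ⋯ < d_1 < d_2 < ⋯` (0-based). -/
abbrev Colour := Lex (ℕ ⊕ ℕ)

def cCol (k : ℕ) : Colour := toLex (Sum.inl k)

def dCol (k : ℕ) : Colour := toLex (Sum.inr k)

/-- `T` is a `lam`-tableau of type `(α|β)`: exactly `α_k` cells of colour `c_k` and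
`β_k` of colour `d_k`. -/
def HasType {lam : List ℕ} (α β : List ℕ) (T : Cell lam → Colour) : Prop :=
  (∀ k : ℕ, (Finset.univ.filter fun c => T c = cCol k).card = α.getD k 0) ∧
  (∀ k : ℕ, (Finset.univ.filter fun c => T c = dCol k).card = β.getD k 0)

/-- The colour of the number `i` under the canonical colouring by `(α|β)`. -/
def colourOfIdx (α β : List ℕ) (i : ℕ) : Colour :=
  if blockOf (α ++ β) i < α.length then cCol (blockOf (α ++ β) i)
  else dCol (blockOf (α ++ β) i - α.length)

/-- The canonical `lam`-tableau of type `(α|β)` associated to the tableau `t0`. -/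
def canonT {n : ℕ} {lam : List ℕ} (t0 : Tab n lam) (α β : List ℕ) : Cell lam → Colour :=
  fun c => colourOfIdx α β (t0 c)

/-- The action `σ · T = T ∘ t0⁻¹ ∘ σ⁻¹ ∘ t0` of `Sym n` on tableaux of type `(α|β)`,
through the fixed tableau `t0`. -/
def actT {n : ℕ} {lam : List ℕ} (t0 : Tab n lam) (σ : Sym n) (T : Cell lam → Colour) :
    Cell lam → Colour :=
  fun c => T (t0.symm (σ⁻¹ (t0 c)))

/-- `T_d = d · T_0`. -/
def TOf {n : ℕ} {lam : List ℕ} (t0 : Tab n lam) (α β : List ℕ) (d : Sym n) :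
    Cell lam → Colour :=
  actT t0 d (canonT t0 α β)

def RowSemistd {lam : List ℕ} (T : Cell lam → Colour) : Prop :=
  ∀ c c' : Cell lam, c.1 = c'.1 → (c.2 : ℕ) < (c'.2 : ℕ) → T c ≤ T c'

def ColSemistd {lam : List ℕ} (T : Cell lam → Colour) : Prop :=
  ∀ c c' : Cell lam, (c.2 : ℕ) = (c'.2 : ℕ) → c.1 < c'.1 → T c ≤ T c'

/-- Repeats in a row occur only for colours `c_k`. -/
def RowRepeatC {lam : List ℕ} (T : Cell lam → Colour) : Prop :=
  ∀ c c' : Cell lam, c.1 = c'.1 → (c.2 : ℕ) ≠ (c'.2 : ℕ) → T c = T c' → ∃ k, T c = cCol k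

/-- Repeats in a column occur only for colours `d_k`. -/
def ColRepeatD {lam : List ℕ} (T : Cell lam → Colour) : Prop :=
  ∀ c c' : Cell lam, (c.2 : ℕ) = (c'.2 : ℕ) → c.1 ≠ c'.1 → T c = T c' → ∃ k, T c = dCol k

def IsSemistd {lam : List ℕ} (T : Cell lam → Colour) : Prop :=
  RowSemistd T ∧ ColSemistd T ∧ RowRepeatC T ∧ ColRepeatD T

/-- A standard tableau: strictly increasing along rows and down columns. -/
def IsStd {n : ℕ} {lam : List ℕ} (t : Tab n lam) : Prop :=
  (∀ c c' : Cell lam, c.1 = c'.1 → (c.2 : ℕ) < (c'.2 : ℕ) → t c < t c') ∧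
  (∀ c c' : Cell lam, (c.2 : ℕ) = (c'.2 : ℕ) → c.1 < c'.1 → t c < t c')

def IsPartition (n : ℕ) (lam : List ℕ) : Prop :=
  lam.Pairwise (· ≥ ·) ∧ (∀ x ∈ lam, 0 < x) ∧ lam.sum = n

def IsBicomp (n : ℕ) (α β : List ℕ) : Prop :=
  (∀ x ∈ α, 0 < x) ∧ (∀ x ∈ β, 0 < x) ∧ α.sum + β.sum = n

/-- `𝒮 = {d : d⁻¹ R_{t0} d ∩ Sym_{α|β} ⊆ Sym_α}`. -/
def RSet {n : ℕ} {lam : List ℕ} (t0 : Tab n lam) (α β : List ℕ) : Set (Sym n) :=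
  {d | ∀ σ ∈ rowStab t0, d⁻¹ * σ * d ∈ youngSubgroup n (α ++ β) →
    d⁻¹ * σ * d ∈ symA n α β}

/-- `𝒞 = {d : d⁻¹ C_{t0} d ∩ Sym_{α|β} ⊆ Sym_β^{+|α|}}`. -/
def CSet {n : ℕ} {lam : List ℕ} (t0 : Tab n lam) (α β : List ℕ) : Set (Sym n) :=
  {d | ∀ σ ∈ colStab t0, d⁻¹ * σ * d ∈ youngSubgroup n (α ++ β) →
    d⁻¹ * σ * d ∈ symB n α β}

/-- The double coset `R_{t0} x Sym_{α|β}`. -/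
def dCoset {n : ℕ} {lam : List ℕ} (t0 : Tab n lam) (α β : List ℕ) (x : Sym n) :
    Set (Sym n) :=
  {ω | ∃ τ ∈ rowStab t0, ∃ ξ ∈ youngSubgroup n (α ++ β), ω = τ * x * ξ}

/-- The double coset `C_{t0} x Sym_{α|β}`. -/
def cCoset {n : ℕ} {lam : List ℕ} (t0 : Tab n lam) (α β : List ℕ) (x : Sym n) :
    Set (Sym n) :=
  {ω | ∃ σ ∈ colStab t0, ∃ ξ ∈ youngSubgroup n (α ++ β), ω = σ * x * ξ}

/-- `ε` is the sign function `ε_𝔡` on the double coset `R_{t0} 𝔡 Sym_{α|β}`: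
`ε(τ 𝔡 ξ_α ξ_β^{+|α|}) = sgn ξ_β`. -/
def IsEps {n : ℕ} {lam : List ℕ} (t0 : Tab n lam) (α β : List ℕ) (𝔡 : Sym n)
    (ε : Sym n → ℤ) : Prop :=
  ∀ τ ∈ rowStab t0, ∀ ξa ∈ symA n α β, ∀ ξb ∈ symB n α β,
    ε (τ * 𝔡 * (ξa * ξb)) = (Equiv.Perm.sign ξb : ℤ)

/-- The coefficient `𝔞_{d,𝔡} = ∑_{σ ∈ C_{t0}, σd ∈ R_{t0} 𝔡 Sym_{α|β}} sgn(σ) ε_𝔡(σ d)`. -/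
noncomputable def coeffA {n : ℕ} {lam : List ℕ} (t0 : Tab n lam) (α β : List ℕ)
    (ε : Sym n → ℤ) (d 𝔡 : Sym n) : ℤ :=
  ∑ σ : Sym n, if σ ∈ colStab t0 ∧ σ * d ∈ dCoset t0 α β 𝔡
    then (Equiv.Perm.sign σ : ℤ) * ε (σ * d) else 0

/-- The multiset of colours in column `j` of `T`. -/
def colMul {lam : List ℕ} (T : Cell lam → Colour) (j : ℕ) : Multiset Colour :=
  (Finset.univ.filter fun c : Cell lam => (c.2 : ℕ) = j).val.map T

noncomputable def sortedCol (m : Multiset Colour) : List Colour := m.sort (· ≤ ·)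

/-- Comparison of column multisets: the sorted lists agree up to position `k`, where
the first is larger. -/
def msGT (m m' : Multiset Colour) : Prop :=
  ∃ k, (∀ s, s < k → (sortedCol m).getD s (cCol 0) = (sortedCol m').getD s (cCol 0)) ∧
    (sortedCol m').getD k (cCol 0) < (sortedCol m).getD k (cCol 0)

/-- The strict column-dominance order `T ⊳ T'`. -/
def TabGT {lam : List ℕ} (T T' : Cell lam → Colour) : Prop :=
  ∃ t, (∀ j, j < t → colMul T j = colMul T' j) ∧ msGT (colMul T t) (colMul T' t)

/-- The column-dominance pre-order `T ⊵ T'`. -/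
def TabGE {lam : List ℕ} (T T' : Cell lam → Colour) : Prop :=
  (∀ j, colMul T j = colMul T' j) ∨ TabGT T T'


/-!
The sum defining `𝔞_{d,𝔡}` runs over the `σ ∈ C_{t0}` with `σ d` in one of the cosets
`d⁽ⁱ⁾ Sym_{α|β} = σ_i d Sym_{α|β}`, so it splits into the fibres
`{σ ∈ C_{t0} | σ d ∈ σ_i d Sym_{α|β}} = σ_i (C_{t0} ∩ d Sym_{α|β} d⁻¹)`, each of the same size.
The summand is constant on a fibre: writing `σ = σ_i d ξ d⁻¹`, the hypothesis `d ∈ 𝒞` puts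
`ξ` in `Sym_β^{+|α|}`, so both `sgn σ` and `ε_𝔡(σ d) = ε_𝔡(σ_i d ξ)` pick up the factor `sgn ξ`,
which cancels in the product.
-/

lemma le_blockOf_iff (γ : List ℕ) (i : ℕ) {k : ℕ} (hk : k ≤ γ.length) :
    k ≤ blockOf γ i ↔ (γ.take k).sum ≤ i := by
  have hblock : blockOf γ i = #{j ∈ range γ.length | (γ.take (j + 1)).sum ≤ i} := by
    simp [blockOf, List.countP_eq_length_filter, filter, range, Multiset.range]
  have hmono := List.monotone_sum_take γ
  rcases Nat.eq_zero_or_pos k with rfl | hk0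
  · simp
  rw [hblock]
  constructor
  · contrapose!
    intro hlt
    calc #{j ∈ range γ.length | (γ.take (j + 1)).sum ≤ i}
        ≤ #(range (k - 1)) := card_le_card fun j hj => by
          rw [mem_filter] at hj
          rw [mem_range]
          by_contra! hj'
          exact (hlt.trans_le (hmono (by omega))).not_ge hj.2
      _ < k := by rw [card_range]; omega
  · intro hsum
    calc k = #(range k) := (card_range k).symm
      _ ≤ _ := card_le_card fun j hj => by
        rw [mem_range] at hj
        rw [mem_filter, mem_range]
        exact ⟨by omega, (hmono (by omega)).trans hsum⟩

lemma sum_le_iff_length_le_blockOf_append (α β : List ℕ) (i : ℕ) :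
    α.sum ≤ i ↔ α.length ≤ blockOf (α ++ β) i := by
  rw [le_blockOf_iff _ _ (by simp), List.take_left]

section Young

variable {n : ℕ} {α β : List ℕ}

lemma lt_sum_iff_of_mem_youngSubgroup {ξ : Sym n} (hξ : ξ ∈ youngSubgroup n (α ++ β))
    (x : Fin n) : (ξ x : ℕ) < α.sum ↔ (x : ℕ) < α.sum := by
  simp only [← not_le, sum_le_iff_length_le_blockOf_append α β, hξ x]

lemma exists_symA_mul_symB {ξ : Sym n} (hξ : ξ ∈ youngSubgroup n (α ++ β)) :
    ∃ a ∈ symA n α β, ∃ b ∈ symB n α β, ξ = a * b := by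
  set p : Fin n → Prop := fun x => (x : ℕ) < α.sum
  have hp : ∀ x, p (ξ x) ↔ p x := lt_sum_iff_of_mem_youngSubgroup hξ
  refine ⟨(ξ.subtypePerm hp).subtypeCongr 1, ⟨fun x => ?_, fun x hx => ?_⟩,
    (1 : Perm {x // p x}).subtypeCongr (ξ.subtypePerm fun x => not_congr (hp x)),
    ⟨fun x => ?_, fun x hx => ?_⟩, ?_⟩
  · by_cases hx : p x <;> simp [hx, hξ x]
  · simp [p, hx]
  · by_cases hx : p x <;> simp [hx, hξ x]
  · simp [p, hx]
  · ext x
    by_cases hx : p x <;> simp [hx, hp]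

lemma mul_mem_symB {x y : Sym n} (hx : x ∈ symB n α β) (hy : y ∈ symB n α β) :
    x * y ∈ symB n α β :=
  ⟨mul_mem hx.1 hy.1, fun i hi => by rw [Perm.mul_apply, hy.2 i hi, hx.2 i hi]⟩

end Young

section Coset

variable {G : Type*} [Group G]

lemma mem_setOf_exists_eq_mul_iff {Y : Subgroup G} {a b ξ y : G} (hξ : ξ ∈ Y)
    (hb : b = a * ξ) : y ∈ {y | ∃ ξ ∈ Y, y = a * ξ} ↔ b⁻¹ * y ∈ Y := by
  have hmem : y ∈ {y | ∃ ξ ∈ Y, y = a * ξ} ↔ a⁻¹ * y ∈ Y :=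
    ⟨by rintro ⟨η, hη, rfl⟩; simpa, fun h => ⟨_, h, by group⟩⟩
  rw [hmem, hb, mul_inv_rev, mul_assoc, Subgroup.mul_mem_cancel_left _ (inv_mem hξ)]

lemma card_filter_mem_coset_eq_card_inter_conj [Fintype G] (H Y : Subgroup G) {s : G}
    (hs : s ∈ H) (d : G) :
    #{σ | σ ∈ H ∧ (s * d)⁻¹ * (σ * d) ∈ Y} =
      Nat.card ↥((H : Set G) ∩ {x | ∃ ξ ∈ Y, x = d * ξ * d⁻¹}) := by
  rw [Nat.card_eq_card_toFinset]
  refine card_nbij' (s⁻¹ * ·) (s * ·) ?_ ?_ ?_ ?_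
  · intro σ hσ
    simp only [coe_filter, mem_univ, true_and, Set.mem_ofPred_eq, Set.toFinset_inter,
      Set.toFinset_ofPred, coe_inter, Set.coe_toFinset, Set.mem_inter_iff,
      SetLike.mem_coe] at hσ ⊢
    exact ⟨H.mul_mem (H.inv_mem hs) hσ.1, _, hσ.2, by group⟩
  · intro x hx
    simp only [coe_filter, mem_univ, true_and, Set.mem_ofPred_eq, Set.toFinset_inter,
      Set.toFinset_ofPred, coe_inter, Set.coe_toFinset, Set.mem_inter_iff,
      SetLike.mem_coe] at hx ⊢
    obtain ⟨hxH, ξ, hξ, rfl⟩ := hx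
    exact ⟨H.mul_mem hs hxH, by convert hξ using 1; group⟩
  · intro σ _; simp
  · intro x _; simp

end Coset

def colStabSubgroup {n : ℕ} {lam : List ℕ} (t : Tab n lam) : Subgroup (Sym n) where
  carrier := colStab t
  one_mem' _ := rfl
  mul_mem' {σ τ} hσ hτ a := (hσ (τ a)).trans (hτ a)
  inv_mem' {σ} hσ a := by
    have h := hσ (σ⁻¹ a)
    rw [← Perm.mul_apply, mul_inv_cancel, Perm.one_apply] at h
    exact h.symm

lemma sign_mul_eps_eq_of_mem_CSet {n : ℕ} {lam : List ℕ} {t0 : Tab n lam} {α β : List ℕ}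
    {d 𝔡 : Sym n} (hd : d ∈ CSet t0 α β) {ε : Sym n → ℤ} (hε : IsEps t0 α β 𝔡 ε)
    {σ σ' : Sym n} (hσ : σ ∈ colStab t0) (hσ' : σ' ∈ colStab t0)
    (h𝔡 : σ' * d ∈ dCoset t0 α β 𝔡)
    (hY : (σ' * d)⁻¹ * (σ * d) ∈ youngSubgroup n (α ++ β)) :
    (Perm.sign σ : ℤ) * ε (σ * d) = (Perm.sign σ' : ℤ) * ε (σ' * d) := by
  have hξ : d⁻¹ * (σ'⁻¹ * σ) * d ∈ symB n α β :=
    hd _ ((colStabSubgroup t0).mul_mem ((colStabSubgroup t0).inv_mem hσ') hσ)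
      (by rwa [show d⁻¹ * (σ'⁻¹ * σ) * d = (σ' * d)⁻¹ * (σ * d) by group])
  generalize hξ_def : d⁻¹ * (σ'⁻¹ * σ) * d = ξ at hξ
  have hσ_eq : σ = σ' * (d * ξ * d⁻¹) := by rw [← hξ_def]; group
  obtain ⟨τ, hτ, η, hη, hσ'd⟩ := h𝔡
  obtain ⟨a, ha, b, hb, rfl⟩ := exists_symA_mul_symB hη
  have hσd : σ * d = τ * 𝔡 * (a * (b * ξ)) := by
    rw [hσ_eq, show σ' * (d * ξ * d⁻¹) * d = σ' * d * ξ by group, hσ'd]; group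
  rw [hσd, hσ'd, hε τ hτ a ha _ (mul_mem_symB hb hξ), hε τ hτ a ha b hb, hσ_eq,
    ← Units.val_mul, ← Units.val_mul, map_mul, map_mul, map_mul, map_mul, map_inv,
    mul_inv_cancel_comm, mul_mul_mul_comm, Int.units_mul_self, mul_one]

theorem coeffA_eq_card_mul_sum_general (n : ℕ) (lam : List ℕ)
    (α β : List ℕ) (t0 : Tab n lam)
    (d 𝔡 : Sym n) (hd : d ∈ CSet t0 α β)
    (ε : Sym n → ℤ) (hε : IsEps t0 α β 𝔡 ε)
    (r : ℕ) (D : Fin r → Sym n) (σs : Fin r → Sym n)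
    (hD : cCoset t0 α β d ∩ dCoset t0 α β 𝔡 =
      ⋃ i : Fin r, {y | ∃ ξ ∈ youngSubgroup n (α ++ β), y = D i * ξ})
    (hdisj : ∀ i i' : Fin r, i ≠ i' →
      Disjoint {y : Sym n | ∃ ξ ∈ youngSubgroup n (α ++ β), y = D i * ξ}
        {y : Sym n | ∃ ξ ∈ youngSubgroup n (α ++ β), y = D i' * ξ})
    (hσ : ∀ i : Fin r, σs i ∈ colStab t0 ∧
      ∃ ξ ∈ youngSubgroup n (α ++ β), σs i * d = D i * ξ) :
    coeffA t0 α β ε d 𝔡 =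
      (Nat.card ↥(colStab t0 ∩
          {x : Sym n | ∃ ξ ∈ youngSubgroup n (α ++ β), x = d * ξ * d⁻¹}) : ℤ) *
        ∑ i : Fin r, (Equiv.Perm.sign (σs i) : ℤ) * ε (σs i * d) := by
  set Y := youngSubgroup n (α ++ β)
  set coset : Fin r → Set (Sym n) := fun i => {y | ∃ ξ ∈ Y, y = D i * ξ}
  have hcoset (i : Fin r) (y : Sym n) : y ∈ coset i ↔ (σs i * d)⁻¹ * y ∈ Y :=
    let ⟨_, _, hξ, h⟩ := hσ i; mem_setOf_exists_eq_mul_iff hξ h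
  set F : Fin r → Finset (Sym n) := fun i => {σ | σ ∈ colStab t0 ∧ σ * d ∈ coset i}
  have hsupport : ({σ | σ ∈ colStab t0 ∧ σ * d ∈ dCoset t0 α β 𝔡} : Finset (Sym n)) =
      univ.biUnion F := by
    ext σ
    simp only [mem_filter, mem_univ, true_and, mem_biUnion, F, exists_and_left]
    refine and_congr_right fun hσC => ?_
    rw [← Set.mem_iUnion, ← hD]
    exact (and_iff_right ⟨σ, hσC, 1, Y.one_mem, by simp⟩).symm
  have hdisjF : ((univ : Finset (Fin r)) : Set (Fin r)).PairwiseDisjoint F := fun i _ j _ hij =>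
    disjoint_filter.2 fun _ _ hi hj => Set.disjoint_left.1 (hdisj i j hij) hi.2 hj.2
  have hcard (i : Fin r) : #(F i) = Nat.card ↥(colStab t0 ∩
      {x : Sym n | ∃ ξ ∈ Y, x = d * ξ * d⁻¹}) := by
    refine (Eq.trans ?_
      (card_filter_mem_coset_eq_card_inter_conj (colStabSubgroup t0) Y (hσ i).1 d))
    simp only [F, hcoset]
    rfl
  have hconst (i : Fin r) (σ : Sym n) (hσF : σ ∈ F i) :
      (Perm.sign σ : ℤ) * ε (σ * d) = (Perm.sign (σs i) : ℤ) * ε (σs i * d) := by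
    have hσs : σs i * d ∈ coset i := (hcoset i _).2 (by simp)
    rw [mem_filter] at hσF
    exact sign_mul_eps_eq_of_mem_CSet hd hε hσF.2.1 (hσ i).1
      (hD.superset (Set.mem_iUnion_of_mem i hσs)).2 ((hcoset i _).1 hσF.2.2)
  rw [coeffA, ← sum_filter, hsupport, sum_biUnion hdisjF, mul_sum]
  refine sum_congr rfl fun i _ => ?_
  rw [sum_congr rfl (hconst i), sum_const, nsmul_eq_mul, hcard]

/-- **Evaluation of `𝔞_{d,𝔡}` (Lemma 3.8(iii)).** Suppose `𝔡 ∈ ℛ`, `d ∈ 𝒞`, and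
`C_{t0} d Sym_{α|β} ∩ R_{t0} 𝔡 Sym_{α|β}` is a disjoint union of the `r` left cosets
`d⁽ⁱ⁾ Sym_{α|β}`. Choosing `σ_i ∈ C_{t0}` with `σ_i d ∈ d⁽ⁱ⁾ Sym_{α|β}`, we have
`𝔞_{d,𝔡} = |C_{t0} ∩ d Sym_{α|β} d⁻¹| · ∑ᵢ sgn(σ_i) ε_𝔡(σ_i d)`. -/
theorem coeffA_eq_card_mul_sum (n : ℕ) (lam : List ℕ) (hl : IsPartition n lam)
    (α β : List ℕ) (hab : IsBicomp n α β) (t0 : Tab n lam)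
    (d 𝔡 : Sym n) (h𝔡 : 𝔡 ∈ RSet t0 α β) (hd : d ∈ CSet t0 α β)
    (ε : Sym n → ℤ) (hε : IsEps t0 α β 𝔡 ε)
    (r : ℕ) (D : Fin r → Sym n) (σs : Fin r → Sym n)
    (hD : cCoset t0 α β d ∩ dCoset t0 α β 𝔡 =
      ⋃ i : Fin r, {y | ∃ ξ ∈ youngSubgroup n (α ++ β), y = D i * ξ})
    (hdisj : ∀ i i' : Fin r, i ≠ i' →
      Disjoint {y : Sym n | ∃ ξ ∈ youngSubgroup n (α ++ β), y = D i * ξ}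
        {y : Sym n | ∃ ξ ∈ youngSubgroup n (α ++ β), y = D i' * ξ})
    (hσ : ∀ i : Fin r, σs i ∈ colStab t0 ∧
      ∃ ξ ∈ youngSubgroup n (α ++ β), σs i * d = D i * ξ) :
    coeffA t0 α β ε d 𝔡 =
      (Nat.card ↥(colStab t0 ∩
          {x : Sym n | ∃ ξ ∈ youngSubgroup n (α ++ β), x = d * ξ * d⁻¹}) : ℤ) *
        ∑ i : Fin r, (Equiv.Perm.sign (σs i) : ℤ) * ε (σs i * d) :=
  coeffA_eq_card_mul_sum_general n lam α β t0 d 𝔡 hd ε hε r D σs hD hdisj hσ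

end SignedYoung
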